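/- arXiv:1605.01432 — 3 statements merged into one kernel-verified Lean document; each statement's English description precedes it below -/
import Mathlib

section
/- A permutation class C is splittable if and only if there exist permutations π, π' ∈ C such that every σ ∈ C admits a red-blue colouring of its points in which the red points avoid the pattern π and the blue points avoid the pattern π'. -/
/-- A permutation of some finite length `n`, as a bijection of `Fin n`. -/
abbrev PPerm : Type := Σ n : ℕ, Equiv.Perm (Fin n)

/-- `Contains π σ` : the pattern `σ` occurs in (is contained in) `π`. -/
def Contains (π σ : PPerm) : Prop :=
  ∃ f : Fin σ.1 → Fin π.1, StrictMono f ∧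
    ∀ i j, σ.2 i < σ.2 j ↔ π.2 (f i) < π.2 (f j)

/-- A permutation class: a set of permutations closed downwards under containment. -/
def IsPermClass (C : Set PPerm) : Prop :=
  ∀ π ∈ C, ∀ σ : PPerm, Contains π σ → σ ∈ C

/-- `σ` is (exactly) the pattern of the set `S` of points of `π`. -/
def PatternOf (π : PPerm) (S : Set (Fin π.1)) (σ : PPerm) : Prop :=
  ∃ f : Fin σ.1 → Fin π.1, StrictMono f ∧ Set.range f = S ∧
    ∀ i j, σ.2 i < σ.2 j ↔ π.2 (f i) < π.2 (f j)

/-- The points of `π` lying in `S` contain an occurrence of `σ`. -/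
def ContainsIn (π : PPerm) (S : Set (Fin π.1)) (σ : PPerm) : Prop :=
  ∃ f : Fin σ.1 → Fin π.1, StrictMono f ∧ (∀ i, f i ∈ S) ∧
    ∀ i j, σ.2 i < σ.2 j ↔ π.2 (f i) < π.2 (f j)

/-- `π` is a merge of `σ` and `τ`: its points split into a part with pattern `σ`
and a part with pattern `τ`. -/
def IsMerge (π σ τ : PPerm) : Prop :=
  ∃ S : Set (Fin π.1), PatternOf π S σ ∧ PatternOf π Sᶜ τ

/-- Merge of two classes. -/
def MergeCl (C D : Set PPerm) : Set PPerm :=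
  {π | ∃ σ ∈ C, ∃ τ ∈ D, IsMerge π σ τ}

/-- The empty permutation. -/
def pempty : PPerm := ⟨0, 1⟩

/-- The singleton permutation `1`. -/
def pone : PPerm := ⟨1, 1⟩

/-- Iterated merge of a list of classes. -/
def MergeAll : List (Set PPerm) → Set PPerm
  | [] => {pempty}
  | [C] => C
  | C :: D :: Cs => MergeCl C (MergeAll (D :: Cs))

/-- A class is splittable if it is contained in the merge of finitely many
of its proper subclasses. -/
def Splittable (C : Set PPerm) : Prop :=
  ∃ Cs : List (Set PPerm), Cs ≠ [] ∧
    (∀ D ∈ Cs, IsPermClass D ∧ D ⊆ C ∧ D ≠ C) ∧ C ⊆ MergeAll Cs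

/-- A class is atomic if it is not the union of two proper subclasses. -/
def Atomic (C : Set PPerm) : Prop :=
  ¬ ∃ D E : Set PPerm, IsPermClass D ∧ IsPermClass E ∧
      D ⊆ C ∧ D ≠ C ∧ E ⊆ C ∧ E ≠ C ∧ C = D ∪ E

/-- Inflation `A[B]` of a class `A` by a class `B`: `π` decomposes into
consecutive nonempty blocks (given by the fibres of the monotone surjection `g`),
the relative order of distinct blocks follows `σ ∈ A`, and each block has its
pattern in `B`. -/
def Inflate (A B : Set PPerm) : Set PPerm :=
  {π | ∃ σ ∈ A, ∃ g : Fin π.1 → Fin σ.1, Monotone g ∧ Function.Surjective g ∧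
    (∀ p q, g p ≠ g q → (π.2 p < π.2 q ↔ σ.2 (g p) < σ.2 (g q))) ∧
    ∀ b : Fin σ.1, ∃ τ ∈ B, PatternOf π {p | g p = b} τ}

/-- Direct sum `σ ⊕ τ`. -/
def psum (σ τ : PPerm) : PPerm :=
  ⟨σ.1 + τ.1, finSumFinEquiv.permCongr (σ.2.sumCongr τ.2)⟩

/-- Skew sum `σ ⊖ τ`. -/
def pskew (σ τ : PPerm) : PPerm :=
  ⟨σ.1 + τ.1,
    finSumFinEquiv.symm.trans ((σ.2.sumCongr τ.2).trans
      ((Equiv.sumComm (Fin σ.1) (Fin τ.1)).trans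
        (finSumFinEquiv.trans (finCongr (Nat.add_comm τ.1 σ.1)))))⟩

/-- Sum-decomposable: a direct sum of two nonempty permutations. -/
def SumDecomp (π : PPerm) : Prop :=
  ∃ σ τ : PPerm, 0 < σ.1 ∧ 0 < τ.1 ∧ π = psum σ τ

/-- Skew-decomposable: a skew sum of two nonempty permutations. -/
def SkewDecomp (π : PPerm) : Prop :=
  ∃ σ τ : PPerm, 0 < σ.1 ∧ 0 < τ.1 ∧ π = pskew σ τ

def SumClosed (C : Set PPerm) : Prop := ∀ σ ∈ C, ∀ τ ∈ C, psum σ τ ∈ C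

def SkewClosed (C : Set PPerm) : Prop := ∀ σ ∈ C, ∀ τ ∈ C, pskew σ τ ∈ C

/-- The class of permutations avoiding the pattern `σ`. -/
def Av (σ : PPerm) : Set PPerm := {π | ¬ Contains π σ}

/-- The basis of a class: minimal permutations not belonging to it. -/
def PBasis (C : Set PPerm) : Set PPerm :=
  {π | π ∉ C ∧ ∀ σ : PPerm, Contains π σ → σ ≠ π → σ ∈ C}

/-- An interval of `π`: a set of points contiguous in positions and in values. -/
def IsInterval (π : PPerm) (S : Set (Fin π.1)) : Prop :=
  (∀ a ∈ S, ∀ b ∈ S, ∀ c, a ≤ c → c ≤ b → c ∈ S) ∧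
  (∀ a ∈ S, ∀ b ∈ S, ∀ c, π.2 a ≤ π.2 c → π.2 c ≤ π.2 b → c ∈ S)

/-- A simple permutation: its only intervals are the subsingletons and the whole. -/
def SimplePerm (π : PPerm) : Prop :=
  ∀ S : Set (Fin π.1), IsInterval π S → S.Subsingleton ∨ S = Set.univ

/-- Build a permutation from a function with an explicit inverse. -/
def mkP {n : ℕ} (f g : Fin n → Fin n)
    (h₁ : ∀ i, g (f i) = i) (h₂ : ∀ i, f (g i) = i) : PPerm :=
  ⟨n, ⟨f, g, h₁, h₂⟩⟩

def p12 : PPerm := ⟨2, 1⟩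
def p21 : PPerm := mkP ![1,0] ![1,0] (by decide) (by decide)
def p213 : PPerm := mkP ![1,0,2] ![1,0,2] (by decide) (by decide)
def p231 : PPerm := mkP ![1,2,0] ![2,0,1] (by decide) (by decide)
def p312 : PPerm := mkP ![2,0,1] ![1,2,0] (by decide) (by decide)
def p1234 : PPerm := ⟨4, 1⟩
def p2143 : PPerm := mkP ![1,0,3,2] ![1,0,3,2] (by decide) (by decide)
def p3412 : PPerm := mkP ![2,3,0,1] ![2,3,0,1] (by decide) (by decide)
def p4321 : PPerm := mkP ![3,2,1,0] ![3,2,1,0] (by decide) (by decide)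
def p2413 : PPerm := mkP ![1,3,0,2] ![2,0,3,1] (by decide) (by decide)
def p3142 : PPerm := mkP ![2,0,3,1] ![1,3,0,2] (by decide) (by decide)

/-- The class `I` of increasing permutations. -/
def IncCl : Set PPerm := Av p21
/-- The class `D` of decreasing permutations. -/
def DecCl : Set PPerm := Av p12
/-- The class `Av(213)`. -/
def Av213 : Set PPerm := Av p213
/-- The class `L = Av(231, 312)` of layered permutations. -/
def Layered : Set PPerm := Av p231 ∩ Av p312
/-- Separable permutations, characterised by avoidance of `2413` and `3142`. -/
def SepA : Set PPerm := Av p2413 ∩ Av p3142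
/-- Separable permutations avoiding every element of `F`. -/
def Avs (F : Set PPerm) : Set PPerm := {π ∈ SepA | ∀ τ ∈ F, ¬ Contains π τ}
/-- The class of separable permutations, defined as the smallest permutation class
containing `1` and closed under direct sums and skew sums. -/
def SepCl : Set PPerm :=
  ⋂₀ {C : Set PPerm | IsPermClass C ∧ pone ∈ C ∧
      ∀ σ ∈ C, ∀ τ ∈ C, psum σ τ ∈ C ∧ pskew σ τ ∈ C}

/-! Drop classes from the front of `C ⊆ C₁ ⊙ (C₂ ⊙ ⋯ ⊙ C_k)` as long as `C` stays inside the
merge of the rest. Since no single `Cᵢ` contains `C`, this stops at some `C ⊆ D ⊙ E` with `D ⊊ C`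
and `C ⊄ E`. Colour each `σ ∈ C` by such a split: the red part lies in `D`, so it avoids any
`π ∈ C \ D`, and the blue part lies in the class `E`, so it avoids any `π' ∈ C \ E`. Conversely,
such colourings place `C` inside the merge of `C ∩ Av π` and `C ∩ Av π'`, and both are proper
subclasses because `π` does not avoid itself. -/

def HasAvoidingColouring (C : Set PPerm) (π π' : PPerm) : Prop :=
  ∀ σ ∈ C, ∃ S : Set (Fin σ.1), ¬ ContainsIn σ S π ∧ ¬ ContainsIn σ Sᶜ π'

namespace Contains

theorem refl (π : PPerm) : Contains π π :=
  ⟨id, strictMono_id, fun _ _ => Iff.rfl⟩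

theorem trans {π σ τ : PPerm} (h₁ : Contains π σ) (h₂ : Contains σ τ) : Contains π τ := by
  obtain ⟨f, hf, hfσ⟩ := h₁
  obtain ⟨g, hg, hgτ⟩ := h₂
  exact ⟨f ∘ g, hf.comp hg, fun i j => (hgτ i j).trans (hfσ _ _)⟩

end Contains

theorem isPermClass_av (π : PPerm) : IsPermClass (Av π) :=
  fun _ hρ _ hρσ hσπ => hρ (hρσ.trans hσπ)

theorem IsPermClass.inter {C D : Set PPerm} (hC : IsPermClass C) (hD : IsPermClass D) :
    IsPermClass (C ∩ D) :=
  fun ρ hρ σ hρσ => ⟨hC ρ hρ.1 σ hρσ, hD ρ hρ.2 σ hρσ⟩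

theorem IsPermClass.exists_subset_av_of_ssubset {C D : Set PPerm} (hD : IsPermClass D)
    (hDC : D ⊂ C) : ∃ π ∈ C, D ⊆ Av π := by
  obtain ⟨π, hπC, hπD⟩ := Set.exists_of_ssubset hDC
  exact ⟨π, hπC, fun ρ hρ hρπ => hπD (hD ρ hρ π hρπ)⟩

theorem inter_av_ne_self {C : Set PPerm} {π : PPerm} (hπ : π ∈ C) : C ∩ Av π ≠ C :=
  fun h => (h.symm ▸ hπ : π ∈ C ∩ Av π).2 (Contains.refl π)

namespace PatternOf

theorem contains {σ τ : PPerm} {S : Set (Fin σ.1)} (h : PatternOf σ S τ) : Contains σ τ :=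
  let ⟨f, hf, _, hfτ⟩ := h
  ⟨f, hf, hfτ⟩

theorem containsIn_iff {σ τ : PPerm} {S : Set (Fin σ.1)} (h : PatternOf σ S τ) (π : PPerm) :
    ContainsIn σ S π ↔ Contains τ π := by
  obtain ⟨e, he, hrange, heτ⟩ := h
  constructor
  · rintro ⟨f, hf, hfS, hfπ⟩
    have hfe : ∀ i, ∃ j, e j = f i := fun i => by rw [← Set.mem_range, hrange]; exact hfS i
    choose g hg using hfe
    refine ⟨g, fun i j hij => he.lt_iff_lt.mp ?_, fun i j => ?_⟩
    · rw [hg, hg]; exact hf hij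
    · rw [hfπ i j, ← hg i, ← hg j, ← heτ]
  · rintro ⟨g, hg, hgπ⟩
    exact ⟨e ∘ g, he.comp hg, fun i => hrange ▸ Set.mem_range_self (g i),
      fun i j => (hgπ i j).trans (heτ _ _)⟩

end PatternOf

/-- Every set of points of `σ` has a pattern: list the points of `S` by position and
replace each value by its rank among the values on `S`. -/
theorem exists_patternOf (σ : PPerm) (S : Set (Fin σ.1)) : ∃ τ : PPerm, PatternOf σ S τ := by
  classical
  set F : Finset (Fin σ.1) := S.toFinite.toFinset
  let pos : Fin F.card ≃o F := F.orderIsoOfFin rfl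
  let V : Finset (Fin σ.1) := F.image σ.2
  let rank : Fin F.card ≃o V := V.orderIsoOfFin (Finset.card_image_of_injective F σ.2.injective)
  let p : Fin F.card → Fin F.card := fun i =>
    rank.symm ⟨σ.2 (pos i), Finset.mem_image_of_mem _ (pos i).2⟩
  have hp : Function.Injective p := fun i j hij =>
    pos.injective <| Subtype.ext <| σ.2.injective <| congrArg Subtype.val (rank.symm.injective hij)
  refine ⟨⟨F.card, Equiv.ofBijective p (Finite.injective_iff_bijective.mp hp)⟩,
    fun i => (pos i : Fin σ.1), fun i j hij => pos.strictMono hij, ?_, fun i j => ?_⟩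
  · ext x
    constructor
    · rintro ⟨i, rfl⟩
      exact S.toFinite.mem_toFinset.mp (pos i).2
    · intro hx
      have hxF : x ∈ F := S.toFinite.mem_toFinset.mpr hx
      exact ⟨pos.symm ⟨x, hxF⟩, congrArg Subtype.val (pos.apply_symm_apply ⟨x, hxF⟩)⟩
  · change p i < p j ↔ _
    rw [rank.symm.lt_iff_lt, Subtype.mk_lt_mk]

theorem PatternOf.contains_of_preimage {π ρ τ υ : PPerm} {S : Set (Fin π.1)}
    {f : Fin ρ.1 → Fin π.1} (hf : StrictMono f) (hfρ : ∀ i j, ρ.2 i < ρ.2 j ↔ π.2 (f i) < π.2 (f j))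
    (hS : PatternOf π S τ) (hυ : PatternOf ρ (f ⁻¹' S) υ) : Contains τ υ := by
  obtain ⟨e, he, hrange, heυ⟩ := hυ
  refine (hS.containsIn_iff υ).mp ⟨f ∘ e, hf.comp he, fun i => ?_,
    fun i j => (heυ i j).trans (hfρ _ _)⟩
  exact (hrange ▸ Set.mem_range_self i : e i ∈ f ⁻¹' S)

theorem IsPermClass.mergeCl {D E : Set PPerm} (hD : IsPermClass D) (hE : IsPermClass E) :
    IsPermClass (MergeCl D E) := by
  rintro π ⟨σ, hσ, τ, hτ, S, hS, hSc⟩ ρ ⟨f, hf, hfρ⟩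
  obtain ⟨σ', hσ'⟩ := exists_patternOf ρ (f ⁻¹' S)
  obtain ⟨τ', hτ'⟩ := exists_patternOf ρ (f ⁻¹' S)ᶜ
  exact ⟨σ', hD σ hσ σ' (hS.contains_of_preimage hf hfρ hσ'),
    τ', hE τ hτ τ' (hSc.contains_of_preimage hf hfρ hτ'), f ⁻¹' S, hσ', hτ'⟩

theorem isPermClass_mergeAll : ∀ {Cs : List (Set PPerm)}, Cs ≠ [] →
    (∀ D ∈ Cs, IsPermClass D) → IsPermClass (MergeAll Cs)
  | [C], _, h => h C List.mem_cons_self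
  | C :: D :: Cs, _, h => (h C List.mem_cons_self).mergeCl
      (isPermClass_mergeAll (List.cons_ne_nil D Cs) fun E hE => h E (List.mem_cons_of_mem C hE))

theorem hasAvoidingColouring_of_subset_mergeCl {C D E : Set PPerm} (hE : IsPermClass E)
    (hCDE : C ⊆ MergeCl D E) {π π' : PPerm} (hπD : D ⊆ Av π) (hπ'E : π' ∉ E) :
    HasAvoidingColouring C π π' := by
  intro σ hσ
  obtain ⟨τ, hτ, τ', hτ', S, hS, hSc⟩ := hCDE hσ
  refine ⟨S, (hS.containsIn_iff π).not.mpr (hπD hτ), (hSc.containsIn_iff π').not.mpr ?_⟩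
  exact fun hτ'π' => hπ'E (hE τ' hτ' π' hτ'π')

theorem subset_mergeCl_of_hasAvoidingColouring {C : Set PPerm} (hC : IsPermClass C)
    {π π' : PPerm} (h : HasAvoidingColouring C π π') :
    C ⊆ MergeCl (C ∩ Av π) (C ∩ Av π') := by
  intro σ hσ
  obtain ⟨S, hSπ, hScπ'⟩ := h σ hσ
  obtain ⟨τ, hτ⟩ := exists_patternOf σ S
  obtain ⟨τ', hτ'⟩ := exists_patternOf σ Sᶜ
  exact ⟨τ, ⟨hC σ hσ τ hτ.contains, (hτ.containsIn_iff π).not.mp hSπ⟩,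
    τ', ⟨hC σ hσ τ' hτ'.contains, (hτ'.containsIn_iff π').not.mp hScπ'⟩, S, hτ, hτ'⟩

theorem exists_hasAvoidingColouring_of_subset_mergeAll {C : Set PPerm} :
    ∀ {Cs : List (Set PPerm)}, Cs ≠ [] → (∀ D ∈ Cs, IsPermClass D ∧ ∃ π ∈ C, D ⊆ Av π) →
      C ⊆ MergeAll Cs → ∃ π ∈ C, ∃ π' ∈ C, HasAvoidingColouring C π π'
  | [D], _, h, hCCs => by
      obtain ⟨-, π, hπ, hDπ⟩ := h D List.mem_cons_self
      exact absurd (Contains.refl π) (hDπ (hCCs hπ))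
  | D :: D' :: Cs, _, h, hCCs => by
      have htail : ∀ E ∈ D' :: Cs, IsPermClass E ∧ ∃ π ∈ C, E ⊆ Av π :=
        fun E hE => h E (List.mem_cons_of_mem D hE)
      by_cases hCtail : C ⊆ MergeAll (D' :: Cs)
      · exact exists_hasAvoidingColouring_of_subset_mergeAll (List.cons_ne_nil D' Cs) htail hCtail
      obtain ⟨π', hπ'C, hπ'⟩ := Set.not_subset.mp hCtail
      obtain ⟨-, π, hπC, hDπ⟩ := h D List.mem_cons_self
      refine ⟨π, hπC, π', hπ'C, hasAvoidingColouring_of_subset_mergeCl ?_ hCCs hDπ hπ'⟩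
      exact isPermClass_mergeAll (List.cons_ne_nil D' Cs) fun E hE => (htail E hE).1

/-- A class `C` is splittable iff there are `π, π' ∈ C` such that every `σ ∈ C`
has a red-blue colouring whose red points avoid `π` and blue points avoid `π'`. -/
theorem stmt2 (C : Set PPerm) (hC : IsPermClass C) :
    Splittable C ↔ ∃ π ∈ C, ∃ π' ∈ C, ∀ σ ∈ C, ∃ S : Set (Fin σ.1),
      ¬ ContainsIn σ S π ∧ ¬ ContainsIn σ Sᶜ π' := by
  constructor
  · rintro ⟨Cs, hCs, hsub, hCCs⟩
    refine exists_hasAvoidingColouring_of_subset_mergeAll hCs (fun D hD => ?_) hCCs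
    obtain ⟨hD, hDC, hDne⟩ := hsub D hD
    exact ⟨hD, hD.exists_subset_av_of_ssubset (hDC.ssubset_of_ne hDne)⟩
  · rintro ⟨π, hπ, π', hπ', hcol⟩
    refine ⟨[C ∩ Av π, C ∩ Av π'], List.cons_ne_nil _ _, ?_,
      subset_mergeCl_of_hasAvoidingColouring hC hcol⟩
    simp only [List.mem_cons, List.not_mem_nil, or_false]
    rintro D (rfl | rfl)
    · exact ⟨hC.inter (isPermClass_av π), Set.inter_subset_left, inter_av_ne_self hπ⟩
    · exact ⟨hC.inter (isPermClass_av π'), Set.inter_subset_left, inter_av_ne_self hπ'⟩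
end

section
/- If a permutation class C is closed under inflation, i.e., C = C[C], then C is unsplittable. -/
/-
Suppose `C ⊆ D₁ ⊙ ⋯ ⊙ Dₖ` with every `Dᵢ` a proper subclass, and pick `πᵢ ∈ C \ Dᵢ`.
Since `C = C[C]`, the iterated inflation `ρ = π₁[π₂[⋯ πₖ[1] ⋯]]` (every point of `π₁` blown up
to a copy of `π₂[⋯]`, and so on) lies in `C`, so its points can be colored by `1, …, k` with
color class `i` having its pattern in `Dᵢ`. Either every block of `ρ = π₁[ρ']` meets color `1`,
and then color `1` contains `π₁`, or some block, a copy of `ρ'`, avoids color `1` and we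
recurse into it with the colors `2, …, k`. Either way some `πᵢ` lies in `Dᵢ`.
-/

def IsOccurrence (σ π : PPerm) (f : Fin σ.1 → Fin π.1) : Prop :=
  StrictMono f ∧ ∀ i j, σ.2 i < σ.2 j ↔ π.2 (f i) < π.2 (f j)

section Occurrence

variable {π σ τ : PPerm}

lemma IsOccurrence.comp {g : Fin τ.1 → Fin π.1} {f : Fin σ.1 → Fin τ.1}
    (hg : IsOccurrence τ π g) (hf : IsOccurrence σ τ f) : IsOccurrence σ π (g ∘ f) :=
  ⟨hg.1.comp hf.1, fun i j => (hf.2 i j).trans (hg.2 (f i) (f j))⟩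

lemma IsOccurrence.of_comp {g : Fin τ.1 → Fin π.1} {f : Fin σ.1 → Fin τ.1}
    (hg : IsOccurrence τ π g) (hgf : IsOccurrence σ π (g ∘ f)) : IsOccurrence σ τ f :=
  ⟨fun _ _ hij => hg.1.lt_iff_lt.mp (hgf.1 hij), fun i j => (hgf.2 i j).trans (hg.2 _ _).symm⟩

lemma containsIn_pempty (S : Set (Fin π.1)) : ContainsIn π S pempty :=
  ⟨Fin.elim0, fun i => i.elim0, fun i => i.elim0, fun i => i.elim0⟩

lemma ContainsIn.mono {S T : Set (Fin π.1)} (hST : S ⊆ T) (h : ContainsIn π S σ) :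
    ContainsIn π T σ :=
  let ⟨f, hf, hS, hv⟩ := h
  ⟨f, hf, fun i => hST (hS i), hv⟩

lemma ContainsIn.contains {S : Set (Fin π.1)} (h : ContainsIn π S σ) : Contains π σ :=
  let ⟨f, hf, _, hv⟩ := h
  ⟨f, hf, hv⟩

lemma ContainsIn.image {g : Fin τ.1 → Fin π.1} (hg : IsOccurrence τ π g) {T : Set (Fin τ.1)}
    (h : ContainsIn τ T σ) : ContainsIn π (g '' T) σ :=
  let ⟨f, hf, hT, hv⟩ := h
  have hgf := hg.comp ⟨hf, hv⟩
  ⟨g ∘ f, hgf.1, fun i => Set.mem_image_of_mem g (hT i), hgf.2⟩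

lemma ContainsIn.of_image {g : Fin τ.1 → Fin π.1} (hg : IsOccurrence τ π g)
    {T : Set (Fin τ.1)} (h : ContainsIn π (g '' T) σ) : ContainsIn τ T σ := by
  obtain ⟨f, hf, hmem, hv⟩ := h
  choose e heT hge using hmem
  have hfe : f = g ∘ e := funext fun i => (hge i).symm
  subst hfe
  exact ⟨e, (hg.of_comp ⟨hf, hv⟩).1, heT, (hg.of_comp ⟨hf, hv⟩).2⟩

lemma PatternOf.contains_of_containsIn {S : Set (Fin π.1)} (hS : PatternOf π S τ)
    (h : ContainsIn π S σ) : Contains τ σ := by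
  obtain ⟨g, hg, hrange, hv⟩ := hS
  rw [← hrange, ← Set.image_univ] at h
  exact (h.of_image ⟨hg, hv⟩).contains

lemma eq_pempty_of_length_eq_zero (h : π.1 = 0) : π = pempty := by
  obtain ⟨n, e⟩ := π
  subst h
  rw [Subsingleton.elim e 1]
  rfl

lemma length_pos_of_not_mem {D : Set PPerm} (hD : pempty ∈ D) (hπ : π ∉ D) : 0 < π.1 :=
  Nat.pos_of_ne_zero fun h => hπ (eq_pempty_of_length_eq_zero h ▸ hD)

lemma contains_pone (h : 0 < π.1) : Contains π pone := by
  have : Subsingleton (Fin pone.1) := inferInstanceAs (Subsingleton (Fin 1))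
  exact ⟨fun _ => ⟨0, h⟩, Subsingleton.strictMono _, fun i j => by simp [Subsingleton.elim i j]⟩

end Occurrence

lemma exists_coloring_of_mem_mergeAll :
    ∀ {Cs : List (Set PPerm)}, (∀ D ∈ Cs, IsPermClass D) → ∀ {π : PPerm}, π ∈ MergeAll Cs →
      ∃ c : Fin π.1 → ℕ, (∀ p, c p < Cs.length) ∧
        ∀ i (hi : i < Cs.length) σ, ContainsIn π {p | c p = i} σ → σ ∈ Cs[i]
  | [], _, _, rfl => ⟨fun _ => 0, fun p => p.elim0, fun _ hi => absurd hi (Nat.not_lt_zero _)⟩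
  | [D], hcl, π, hπ => by
    refine ⟨fun _ => 0, fun _ => Nat.one_pos, fun i hi σ h => ?_⟩
    obtain rfl : i = 0 := Nat.lt_one_iff.mp hi
    exact hcl D List.mem_cons_self π hπ σ h.contains
  | D :: E :: Cs, hcl, π, ⟨σ, hσ, τ, hτ, S, hS, g, hg, hrange, hv⟩ => by
    obtain ⟨c', hc'lt, hc'⟩ :=
      exists_coloring_of_mem_mergeAll (fun F hF => hcl F (List.mem_cons_of_mem _ hF)) hτ
    classical
    -- points of `S` get color `0`; the point `g q` of `Sᶜ` gets color `c' q + 1`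
    set c := Function.extend g (fun q => c' q + 1) fun _ => 0
    have hc_image : ∀ q, c (g q) = c' q + 1 := hg.injective.extend_apply _ _
    have hc_zero : ∀ p ∈ S, c p = 0 := fun p hp => Function.extend_apply' _ _ _ fun ⟨q, hq⟩ =>
      (hrange ▸ Set.mem_range_self q : g q ∈ Sᶜ) (hq ▸ hp)
    have hc_compl : ∀ p ∉ S, ∃ q, g q = p := fun p hp =>
      (hrange.symm ▸ (hp : p ∈ Sᶜ) : p ∈ Set.range g)
    refine ⟨c, fun p => ?_, fun i hi ρ h => ?_⟩
    · by_cases hp : p ∈ S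
      · simp [hc_zero p hp]
      · obtain ⟨q, rfl⟩ := hc_compl p hp
        simpa [hc_image] using hc'lt q
    · cases i with
      | zero =>
        refine hcl D List.mem_cons_self σ hσ ρ (hS.contains_of_containsIn (h.mono ?_))
        intro p hp
        by_contra hpS
        obtain ⟨q, rfl⟩ := hc_compl p hpS
        simp [hc_image] at hp
      | succ j =>
        refine hc' j (by simpa using hi) ρ ((h.mono ?_).of_image ⟨hg, hv⟩)
        intro p hp
        by_cases hpS : p ∈ S
        · simp [hc_zero p hpS] at hp
        · obtain ⟨q, rfl⟩ := hc_compl p hpS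
          exact ⟨q, by simpa [hc_image] using hp, rfl⟩

lemma pempty_mem_of_mem_mergeAll {Cs : List (Set PPerm)} (hcl : ∀ D ∈ Cs, IsPermClass D)
    {π : PPerm} (hπ : π ∈ MergeAll Cs) {D : Set PPerm} (hD : D ∈ Cs) : pempty ∈ D := by
  obtain ⟨c, -, hc⟩ := exists_coloring_of_mem_mergeAll hcl hπ
  obtain ⟨i, hi, rfl⟩ := List.getElem_of_mem hD
  exact hc i hi pempty (containsIn_pempty _)

section Inflation

lemma finProdFinEquiv_lt_finProdFinEquiv_iff {m n : ℕ} {x y : Fin m × Fin n} :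
    finProdFinEquiv x < finProdFinEquiv y ↔ x.1 < y.1 ∨ x.1 = y.1 ∧ x.2 < y.2 := by
  obtain ⟨⟨a, ha⟩, ⟨i, hi⟩⟩ := x
  obtain ⟨⟨b, hb⟩, ⟨j, hj⟩⟩ := y
  simp only [Fin.lt_def, Fin.ext_iff, finProdFinEquiv_apply_val]
  rcases lt_trichotomy a b with hab | rfl | hab
  · have := Nat.mul_le_mul_left n (Nat.succ_le_of_lt hab)
    simp only [Nat.mul_succ] at this
    omega
  · omega
  · have := Nat.mul_le_mul_left n (Nat.succ_le_of_lt hab)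
    simp only [Nat.mul_succ] at this
    omega

/-- The inflation `σ[τ, τ, …, τ]`: point `finProdFinEquiv (b, i)` is point `i` of block `b`.
An `abbrev`, so that its positions are reducibly `Fin (σ.1 * τ.1)`. -/
abbrev uniformInflation (σ τ : PPerm) : PPerm :=
  ⟨σ.1 * τ.1, finProdFinEquiv.permCongr (σ.2.prodCongr τ.2)⟩

variable {σ τ : PPerm}

lemma uniformInflation_apply (x : Fin σ.1 × Fin τ.1) :
    (uniformInflation σ τ).2 (finProdFinEquiv x) = finProdFinEquiv (σ.2 x.1, τ.2 x.2) := by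
  simp [Prod.map]

lemma uniformInflation_lt_iff_of_ne {x y : Fin σ.1 × Fin τ.1} (h : x.1 ≠ y.1) :
    (uniformInflation σ τ).2 (finProdFinEquiv x) < (uniformInflation σ τ).2 (finProdFinEquiv y) ↔
      σ.2 x.1 < σ.2 y.1 := by
  rw [uniformInflation_apply, uniformInflation_apply, finProdFinEquiv_lt_finProdFinEquiv_iff]
  simp [σ.2.injective.ne h]

lemma isOccurrence_block (b : Fin σ.1) :
    IsOccurrence τ (uniformInflation σ τ) fun i => finProdFinEquiv (b, i) := by
  refine ⟨fun i j hij => finProdFinEquiv_lt_finProdFinEquiv_iff.mpr (Or.inr ⟨rfl, hij⟩),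
    fun i j => ?_⟩
  rw [uniformInflation_apply, uniformInflation_apply, finProdFinEquiv_lt_finProdFinEquiv_iff]
  simp

lemma isOccurrence_transversal (s : Fin σ.1 → Fin τ.1) :
    IsOccurrence σ (uniformInflation σ τ) fun b => finProdFinEquiv (b, s b) := by
  refine ⟨fun b b' hbb' => finProdFinEquiv_lt_finProdFinEquiv_iff.mpr (Or.inl hbb'),
    fun b b' => ?_⟩
  rcases eq_or_ne b b' with rfl | hbb'
  · simp
  · exact (uniformInflation_lt_iff_of_ne (x := (b, s b)) (y := (b', s b')) hbb').symm

lemma uniformInflation_mem_inflate {A B : Set PPerm} (hσ : σ ∈ A) (hτ : τ ∈ B) (hτ₀ : 0 < τ.1) :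
    uniformInflation σ τ ∈ Inflate A B := by
  refine ⟨σ, hσ, fun p => (finProdFinEquiv.symm p).1, fun p q hpq => ?_,
    fun b => ⟨finProdFinEquiv (b, ⟨0, hτ₀⟩), by simp⟩, fun p q hpq => ?_, fun b => ?_⟩
  · obtain ⟨x, rfl⟩ := finProdFinEquiv.surjective p
    obtain ⟨y, rfl⟩ := finProdFinEquiv.surjective q
    simp only [Equiv.symm_apply_apply]
    by_contra! hyx
    exact (finProdFinEquiv_lt_finProdFinEquiv_iff.mpr (Or.inl hyx)).not_ge hpq
  · obtain ⟨x, rfl⟩ := finProdFinEquiv.surjective p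
    obtain ⟨y, rfl⟩ := finProdFinEquiv.surjective q
    simp only [Equiv.symm_apply_apply] at hpq ⊢
    exact uniformInflation_lt_iff_of_ne hpq
  · refine ⟨τ, hτ, fun i => finProdFinEquiv (b, i), (isOccurrence_block b).1, ?_,
      (isOccurrence_block b).2⟩
    ext p
    obtain ⟨x, rfl⟩ := finProdFinEquiv.surjective p
    simp only [Set.mem_range, Set.mem_ofPred_eq, Equiv.symm_apply_apply,
      finProdFinEquiv.injective.eq_iff, Prod.ext_iff]
    exact ⟨fun ⟨_, hb, _⟩ => hb ▸ rfl, fun hb => ⟨x.2, hb ▸ rfl, rfl⟩⟩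

end Inflation

/-- `iteratedInflation [π₁, …, πₖ] = π₁[π₂[⋯ πₖ[1] ⋯]]`. -/
def iteratedInflation (L : List PPerm) : PPerm :=
  L.foldr uniformInflation pone

lemma iteratedInflation_mem {C : Set PPerm} (hC : Inflate C C ⊆ C) (hone : pone ∈ C) :
    ∀ L : List PPerm, (∀ π ∈ L, π ∈ C ∧ 0 < π.1) →
      iteratedInflation L ∈ C ∧ 0 < (iteratedInflation L).1
  | [], _ => ⟨hone, Nat.one_pos⟩
  | π :: L, hL => by
    obtain ⟨hπ, hπ₀⟩ := hL π List.mem_cons_self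
    obtain ⟨hρ, hρ₀⟩ := iteratedInflation_mem hC hone L fun σ hσ => hL σ (List.mem_cons_of_mem _ hσ)
    exact ⟨hC (uniformInflation_mem_inflate hπ hρ hρ₀), Nat.mul_pos hπ₀ hρ₀⟩

def ColoringForces (ρ : PPerm) (L : List PPerm) : Prop :=
  ∀ c : Fin ρ.1 → ℕ, (∀ p, c p < L.length) →
    ∃ i, ∃ hi : i < L.length, ContainsIn ρ {p | c p = i} L[i]

lemma ColoringForces.uniformInflation {ρ : PPerm} {L : List PPerm} (h : ColoringForces ρ L)
    (π : PPerm) : ColoringForces (uniformInflation π ρ) (π :: L) := by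
  intro c hc
  by_cases hall : ∀ b, ∃ i, c (finProdFinEquiv (b, i)) = 0
  · choose s hs using hall
    exact ⟨0, by simp, _, (isOccurrence_transversal s).1, hs, (isOccurrence_transversal s).2⟩
  push Not at hall
  obtain ⟨b, hb⟩ := hall
  -- block `b` avoids color `0`, so it is a copy of `ρ` colored by `c - 1`
  obtain ⟨i, hi, hcontains⟩ := h (fun q => c (finProdFinEquiv (b, q)) - 1) fun q => by
    have := hc (finProdFinEquiv (b, q))
    have := hb q
    simp only [List.length_cons] at *
    omega
  refine ⟨i + 1, by simpa using hi, (hcontains.image (isOccurrence_block b)).mono ?_⟩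
  rintro _ ⟨q, hq, rfl⟩
  have := hb q
  simp only [Set.mem_ofPred_eq] at hq ⊢
  omega

lemma coloringForces_iteratedInflation : ∀ L : List PPerm, ColoringForces (iteratedInflation L) L
  | [], _, hc => absurd (hc ⟨0, Nat.one_pos⟩) (Nat.not_lt_zero _)
  | π :: L, c, hc => (coloringForces_iteratedInflation L).uniformInflation π c hc

/-- If a permutation class is closed under inflation, `C = C[C]`, then it is
unsplittable. -/
theorem stmt4 (C : Set PPerm) (hC : IsPermClass C) (h : Inflate C C = C) :
    ¬ Splittable C := by
  rintro ⟨Cs, hne, hsub, hcover⟩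
  have hcl : ∀ D ∈ Cs, IsPermClass D := fun D hD => (hsub D hD).1
  have hproper : ∀ D ∈ Cs, ∃ π ∈ C, π ∉ D := fun D hD =>
    Set.exists_of_ssubset ((hsub D hD).2.1.ssubset_of_ne (hsub D hD).2.2)
  obtain ⟨π₀, hπ₀, -⟩ := hproper _ (List.head_mem hne)
  have hwitness : ∀ D ∈ Cs, ∃ π ∈ C, 0 < π.1 ∧ π ∉ D := fun D hD => by
    obtain ⟨π, hπ, hπD⟩ := hproper D hD
    exact ⟨π, hπ, length_pos_of_not_mem (pempty_mem_of_mem_mergeAll hcl (hcover hπ₀) hD) hπD, hπD⟩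
  choose! w hw using hwitness
  have hone : pone ∈ C :=
    hC _ (hw _ (List.head_mem hne)).1 _ (contains_pone (hw _ (List.head_mem hne)).2.1)
  obtain ⟨hρ, -⟩ := iteratedInflation_mem h.le hone (Cs.map w) (by
    simpa using fun D hD => ⟨(hw D hD).1, (hw D hD).2.1⟩)
  obtain ⟨c, hclt, hc⟩ := exists_coloring_of_mem_mergeAll hcl (hcover hρ)
  obtain ⟨i, hi, hcontains⟩ := coloringForces_iteratedInflation _ c (by simpa using hclt)
  have hi' : i < Cs.length := by simpa using hi
  exact (hw _ (List.getElem_mem hi')).2.2 (by simpa using hc i hi' _ hcontains)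
end

section
/- For any permutation classes X and Y, (B X) ∩ (B Y) = B(X ∩ Y), where B = Av(213) and B X denotes the inflation class B[X]. -/
section Aux
open Function

lemma rankPerm {k : ℕ} {α : Type*} [LinearOrder α] (w : Fin k → α) (hw : Function.Injective w) :
    ∃ ρ : Equiv.Perm (Fin k), ∀ a b, ρ a < ρ b ↔ w a < w b := by
  classical
  set s : Finset α := Finset.image w Finset.univ with hs
  have hcard : s.card = k := by
    rw [hs, Finset.card_image_of_injective _ hw, Finset.card_univ, Fintype.card_fin]
  let e := s.orderIsoOfFin hcard
  have hmem : ∀ a, w a ∈ s := fun a => Finset.mem_image_of_mem _ (Finset.mem_univ a)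
  let w' : Fin k → s := fun a => ⟨w a, hmem a⟩
  have hw' : Function.Injective w' := fun a b h => hw (congrArg Subtype.val h)
  have hbij : Function.Bijective w' := by
    rw [Fintype.bijective_iff_injective_and_card]
    exact ⟨hw', by simp [Fintype.card_coe, hcard]⟩
  refine ⟨(Equiv.ofBijective w' hbij).trans e.symm.toEquiv, fun a b => ?_⟩
  simp only [Equiv.trans_apply]
  rw [show (e.symm.toEquiv : s → Fin k) = e.symm from rfl]
  rw [e.symm.lt_iff_lt]
  exact Iff.rfl

lemma patternOf_exists (π : PPerm) (S : Set (Fin π.1)) : ∃ τ : PPerm, PatternOf π S τ := by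
  classical
  set s : Finset (Fin π.1) := S.toFinset with hsdef
  set k := s.card with hk
  let f := s.orderEmbOfFin rfl
  have hw : Function.Injective (fun i : Fin k => π.2 (f i)) := by
    intro a b h
    exact f.injective (π.2.injective h)
  obtain ⟨ρ, hρ⟩ := rankPerm _ hw
  refine ⟨⟨k, ρ⟩, fun i => f i, f.strictMono, ?_, fun i j => hρ i j⟩
  rw [show (fun i : Fin k => f i) = ⇑f from rfl]
  rw [Finset.range_orderEmbOfFin]
  exact S.coe_toFinset

lemma contains_of_patternOf_subset {π : PPerm} {S S' : Set (Fin π.1)} {τ τ' : PPerm}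
    (h : PatternOf π S τ) (h' : PatternOf π S' τ') (hss : S ⊆ S') : Contains τ' τ := by
  obtain ⟨f, hf, hrange, hcmp⟩ := h
  obtain ⟨f', hf', hrange', hcmp'⟩ := h'
  have hmem : ∀ i, ∃ j, f' j = f i := by
    intro i
    have : f i ∈ S' := hss (hrange ▸ Set.mem_range_self i)
    rwa [← hrange'] at this
  choose e he using hmem
  refine ⟨e, ?_, ?_⟩
  · intro a b hab
    have h2 : f' (e a) < f' (e b) := by rw [he a, he b]; exact hf hab
    exact hf'.lt_iff_lt.mp h2
  · intro i j
    rw [hcmp i j, ← he i, ← he j, hcmp']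

lemma contains213 {m : ℕ} (σ : Equiv.Perm (Fin m)) {i j l : Fin m} (hij : i < j) (hjl : j < l)
    (h1 : σ j < σ i) (h2 : σ i < σ l) : Contains ⟨m, σ⟩ p213 := by
  have h3 : σ j < σ l := h1.trans h2
  have hil : i < l := hij.trans hjl
  refine ⟨fun x => if x.1 = 0 then i else if x.1 = 1 then j else l, ?_, ?_⟩
  · rintro ⟨av, ha⟩ ⟨bv, hb⟩ hab
    have ha' : av < 3 := ha
    have hb' : bv < 3 := hb
    have hab' : av < bv := hab
    interval_cases av <;> interval_cases bv <;> simp <;>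
      first | omega | exact hij | exact hjl | exact hil
  · have key : ∀ x y : Fin p213.1, p213.2 x < p213.2 y ↔
        ((if x.1 = 0 then 1 else if x.1 = 1 then 0 else 2) : ℕ) <
        (if y.1 = 0 then 1 else if y.1 = 1 then 0 else 2) := by decide
    rintro ⟨av, ha⟩ ⟨bv, hb⟩
    have ha' : av < 3 := ha
    have hb' : bv < 3 := hb
    rw [key]
    interval_cases av <;> interval_cases bv <;>
      (simp only []; norm_num) <;> omega

end Aux
/-- `(B X) ∩ (B Y) = B (X ∩ Y)` where `B = Av(213)`. -/
theorem stmt15 (X Y : Set PPerm) (hX : IsPermClass X) (hY : IsPermClass Y) :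
    Inflate Av213 X ∩ Inflate Av213 Y = Inflate Av213 (X ∩ Y) := by
  classical
  apply Set.Subset.antisymm
  · rintro π ⟨hx, hy⟩
    obtain ⟨σ, hσ, g, hgm, hgs, hgc, hgb⟩ := hx
    obtain ⟨σ', hσ', g', hgm', hgs', hgc', hgb'⟩ := hy
    -- common refinement
    set c : Fin π.1 → Fin σ.1 ×ₗ Fin σ'.1 := fun p => toLex (g p, g' p) with hc
    have hcm : Monotone c := fun p q hpq => Prod.Lex.toLex_mono ⟨hgm hpq, hgm' hpq⟩
    set s : Finset (Fin σ.1 ×ₗ Fin σ'.1) := Finset.image c Finset.univ with hsdef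
    set k := s.card with hk
    let e := s.orderIsoOfFin rfl
    have hmem : ∀ p, c p ∈ s := fun p => Finset.mem_image_of_mem _ (Finset.mem_univ p)
    set h : Fin π.1 → Fin k := fun p => e.symm ⟨c p, hmem p⟩ with hhdef
    have hceq : ∀ p q, h p = h q ↔ c p = c q := by
      intro p q
      constructor
      · intro hpq
        have h2 : e.symm ⟨c p, hmem p⟩ = e.symm ⟨c q, hmem q⟩ := hpq
        have h3 := congrArg e h2
        simp only [OrderIso.apply_symm_apply] at h3
        exact congrArg Subtype.val h3
      · intro hpq
        simp only [hhdef]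
        congr 1
        exact Subtype.ext hpq
    have hgeq : ∀ p q, c p = c q → g p = g q ∧ g' p = g' q := by
      intro p q hpq
      have h2 : (g p, g' p) = (g q, g' q) := toLex.injective hpq
      exact ⟨congrArg Prod.fst h2, congrArg Prod.snd h2⟩
    have hmono : Monotone h := by
      intro p q hpq
      have : (⟨c p, hmem p⟩ : s) ≤ ⟨c q, hmem q⟩ := hcm hpq
      exact e.symm.monotone this
    have hsurj : Function.Surjective h := by
      intro b
      have hb : (e b : Fin σ.1 ×ₗ Fin σ'.1) ∈ Finset.image c Finset.univ := (e b).2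
      obtain ⟨p, -, hp⟩ := Finset.mem_image.mp hb
      refine ⟨p, ?_⟩
      simp only [hhdef]
      rw [show (⟨c p, hmem p⟩ : s) = e b from Subtype.ext hp]
      exact e.symm_apply_apply b
    choose r hr using hsurj
    have hcr : ∀ p, c (r (h p)) = c p := fun p => (hceq _ _).mp (hr (h p))
    -- the quotient permutation
    have hwinj : Function.Injective (fun b : Fin k => π.2 (r b)) := by
      intro a b hab
      have h2 : r a = r b := π.2.injective hab
      rw [← hr a, ← hr b, h2]
    obtain ⟨ρ, hρ⟩ := rankPerm _ hwinj
    -- cross-block comparison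
    have hcross : ∀ p q, h p ≠ h q → (π.2 p < π.2 q ↔ π.2 (r (h p)) < π.2 (r (h q))) := by
      intro p q hpq
      have hcne : c p ≠ c q := fun hcc => hpq ((hceq p q).mpr hcc)
      by_cases hg : g p = g q
      · have hg' : g' p ≠ g' q := by
          intro hgg
          exact hcne (by rw [hc]; simp [hg, hgg])
        have h1 : g' (r (h p)) = g' p := (hgeq _ _ (hcr p)).2
        have h2 : g' (r (h q)) = g' q := (hgeq _ _ (hcr q)).2
        rw [hgc' p q hg', hgc' _ _ (by rw [h1, h2]; exact hg'), h1, h2]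
      · have h1 : g (r (h p)) = g p := (hgeq _ _ (hcr p)).1
        have h2 : g (r (h q)) = g q := (hgeq _ _ (hcr q)).1
        rw [hgc p q hg, hgc _ _ (by rw [h1, h2]; exact hg), h1, h2]
    -- ρ avoids 213
    have hav : (⟨k, ρ⟩ : PPerm) ∈ Av213 := by
      rintro ⟨f, hfm, hfc⟩
      have hf01 : f ⟨0, by decide⟩ < f ⟨1, by decide⟩ := hfm (by decide)
      have hf12 : f ⟨1, by decide⟩ < f ⟨2, by decide⟩ := hfm (by decide)
      have hv10 : ρ (f ⟨1, by decide⟩) < ρ (f ⟨0, by decide⟩) := (hfc _ _).mp (by decide)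
      have hv02 : ρ (f ⟨0, by decide⟩) < ρ (f ⟨2, by decide⟩) := (hfc _ _).mp (by decide)
      set a := f ⟨0, by decide⟩ with hadef
      set b := f ⟨1, by decide⟩ with hbdef
      set cc := f ⟨2, by decide⟩ with hccdef
      have hAB : r a < r b := by
        rcases lt_or_ge (r a) (r b) with hlt | hle
        · exact hlt
        · exfalso
          have h4 := hmono hle
          rw [hr, hr] at h4
          exact absurd (h4.trans_lt hf01) (lt_irrefl _)
      have hBC : r b < r cc := by
        rcases lt_or_ge (r b) (r cc) with hlt | hle
        · exact hlt
        · exfalso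
          have h4 := hmono hle
          rw [hr, hr] at h4
          exact absurd (h4.trans_lt hf12) (lt_irrefl _)
      have hvBA : π.2 (r b) < π.2 (r a) := (hρ b a).mp hv10
      have hvAC : π.2 (r a) < π.2 (r cc) := (hρ a cc).mp hv02
      have hcongr : ∀ p q, g p = g q → g' p = g' q → c p = c q := by
        intro p q h5 h6
        simp only [hc, h5, h6]
      by_cases hgAB : g (r a) = g (r b)
      · have hg'AB : g' (r a) ≠ g' (r b) := by
          intro hgg
          have h4 : h (r a) = h (r b) := (hceq _ _).mpr (hcongr _ _ hgAB hgg)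
          rw [hr, hr] at h4
          exact absurd (h4 ▸ hf01) (lt_irrefl _)
        by_cases hg'AC : g' (r a) = g' (r cc)
        · have h5 : g' (r b) ≤ g' (r a) := by rw [hg'AC]; exact hgm' hBC.le
          exact hg'AB (le_antisymm (hgm' hAB.le) h5)
        · by_cases hg'BC : g' (r b) = g' (r cc)
          · have e1 : σ'.2 (g' (r b)) < σ'.2 (g' (r a)) := (hgc' _ _ (Ne.symm hg'AB)).mp hvBA
            have e2 : σ'.2 (g' (r a)) < σ'.2 (g' (r cc)) := (hgc' _ _ hg'AC).mp hvAC
            rw [← hg'BC] at e2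
            exact absurd (e1.trans e2) (lt_irrefl _)
          · have hlt1 : g' (r a) < g' (r b) := lt_of_le_of_ne (hgm' hAB.le) hg'AB
            have hlt2 : g' (r b) < g' (r cc) := lt_of_le_of_ne (hgm' hBC.le) hg'BC
            have e1 : σ'.2 (g' (r b)) < σ'.2 (g' (r a)) := (hgc' _ _ (Ne.symm hg'AB)).mp hvBA
            have e2 : σ'.2 (g' (r a)) < σ'.2 (g' (r cc)) := (hgc' _ _ hg'AC).mp hvAC
            exact hσ' (contains213 σ'.2 hlt1 hlt2 e1 e2)
      · by_cases hgBC : g (r b) = g (r cc)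
        · have hgAC : g (r a) ≠ g (r cc) := fun h5 => hgAB (h5.trans hgBC.symm)
          have e1 : σ.2 (g (r b)) < σ.2 (g (r a)) := (hgc _ _ (Ne.symm hgAB)).mp hvBA
          have e2 : σ.2 (g (r a)) < σ.2 (g (r cc)) := (hgc _ _ hgAC).mp hvAC
          rw [← hgBC] at e2
          exact absurd (e1.trans e2) (lt_irrefl _)
        · by_cases hgAC : g (r a) = g (r cc)
          · have h5 : g (r b) ≤ g (r a) := by rw [hgAC]; exact hgm hBC.le
            exact hgAB (le_antisymm (hgm hAB.le) h5)
          · have hlt1 : g (r a) < g (r b) := lt_of_le_of_ne (hgm hAB.le) hgAB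
            have hlt2 : g (r b) < g (r cc) := lt_of_le_of_ne (hgm hBC.le) hgBC
            have e1 : σ.2 (g (r b)) < σ.2 (g (r a)) := (hgc _ _ (Ne.symm hgAB)).mp hvBA
            have e2 : σ.2 (g (r a)) < σ.2 (g (r cc)) := (hgc _ _ hgAC).mp hvAC
            exact hσ (contains213 σ.2 hlt1 hlt2 e1 e2)
    -- assemble
    refine ⟨⟨k, ρ⟩, hav, h, hmono, fun b => ⟨r b, hr b⟩, ?_, ?_⟩
    · intro p q hpq
      rw [hcross p q hpq]
      exact (hρ (h p) (h q)).symm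
    · intro b
      obtain ⟨τ, hτ⟩ := patternOf_exists π {p | h p = b}
      obtain ⟨τX, hτX, hpX⟩ := hgb (g (r b))
      obtain ⟨τY, hτY, hpY⟩ := hgb' (g' (r b))
      have hsubX : {p | h p = b} ⊆ {p | g p = g (r b)} := by
        intro p hp
        have hcp : c p = c (r b) := (hceq p (r b)).mp (hp.trans (hr b).symm)
        exact (hgeq _ _ hcp).1
      have hsubY : {p | h p = b} ⊆ {p | g' p = g' (r b)} := by
        intro p hp
        have hcp : c p = c (r b) := (hceq p (r b)).mp (hp.trans (hr b).symm)
        exact (hgeq _ _ hcp).2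
      exact ⟨τ, ⟨hX τX hτX τ (contains_of_patternOf_subset hτ hpX hsubX),
                 hY τY hτY τ (contains_of_patternOf_subset hτ hpY hsubY)⟩, hτ⟩
  · rintro π ⟨σ, hσ, g, hgm, hgs, hgc, hgb⟩
    constructor
    · refine ⟨σ, hσ, g, hgm, hgs, hgc, fun b => ?_⟩
      obtain ⟨τ, ⟨hτX, _⟩, hp⟩ := hgb b
      exact ⟨τ, hτX, hp⟩
    · refine ⟨σ, hσ, g, hgm, hgs, hgc, fun b => ?_⟩
      obtain ⟨τ, ⟨_, hτY⟩, hp⟩ := hgb b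
      exact ⟨τ, hτY, hp⟩
end
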